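/- arXiv:1803.06432 — 4 statements merged into one kernel-verified Lean document; each statement's English description precedes it below -/
import Mathlib

section
/- For the Heisenberg group ℍ = ℝ³ with group law (a,b,c)·(u,v,s) = (a+u, b+v, c+s+(ub-va)/2), the function τ(a,b,c) = (a/2, b/2, c/2 + ab/6) satisfies the symmetry condition τ(x) = τ(x⁻¹)·x for all x ∈ ℍ. -/
/-- Heisenberg group law on ℝ³: `(a,b,c)·(u,v,s) = (a+u, b+v, c+s+(ub-va)/2)`. -/
noncomputable def Hmul (x y : ℝ × ℝ × ℝ) : ℝ × ℝ × ℝ :=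
  (x.1 + y.1, x.2.1 + y.2.1, x.2.2 + y.2.2 + (y.1 * x.2.1 - y.2.1 * x.1) / 2)

/-- Inverse: `(a,b,c)⁻¹ = (-a,-b,-c)`. -/
def Hinv (x : ℝ × ℝ × ℝ) : ℝ × ℝ × ℝ := (-x.1, -x.2.1, -x.2.2)

/-- Symmetry function on the Heisenberg group. -/
noncomputable def Hτ (x : ℝ × ℝ × ℝ) : ℝ × ℝ × ℝ :=
  (x.1 / 2, x.2.1 / 2, x.2.2 / 2 + x.1 * x.2.1 / 6)

/-- `τ(a,b,c) = (a/2, b/2, c/2 + ab/6)` satisfies the symmetry condition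
`τ(x) = τ(x⁻¹)·x` on the Heisenberg group. -/
theorem heisenberg_symmetry (x : ℝ × ℝ × ℝ) : Hτ x = Hmul (Hτ (Hinv x)) x := by
  obtain ⟨a, b, c⟩ := x
  simp only [Hτ, Hmul, Hinv, Prod.mk.injEq]
  -- The horizontal part of `τ(x⁻¹)` is `-(a, b)/2`, parallel to that of `x`,
  -- so the commutator term `(ub - va)/2` of the product vanishes.
  exact ⟨by ring, by ring, by ring⟩
end

section
/- On the Heisenberg group with τ(a,b,c) = (a/2, b/2, c/2 + ab/6) and midpoint m(x,y) = x·τ(y⁻¹x)⁻¹, the midpoint between x = (a,b,c) and its inverse x⁻¹ = (-a,-b,-c) equals (0, 0, -2ab/3). In particular, m(x, x⁻¹) is the group identity if and only if ab = 0. -/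
/-- Midpoint function `m(x,y) = x·τ(y⁻¹x)⁻¹`. -/
noncomputable def Hmid (x y : ℝ × ℝ × ℝ) : ℝ × ℝ × ℝ :=
  Hmul x (Hinv (Hτ (Hmul (Hinv y) x)))

/-!
In these (exponential) coordinates `x² = 2x`, so `τ` would return `x` on `x²` were it not for
its correction term `ab/6`: instead `τ(x²) = x·z` with `z = (0, 0, 2ab/3)` central. Hence
`m(x, x⁻¹) = x·τ(x²)⁻¹ = x·(x·z)⁻¹ = z⁻¹`, which is trivial exactly when `ab = 0`.
-/

theorem Hinv_Hinv (x : ℝ × ℝ × ℝ) : Hinv (Hinv x) = x := by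
  simp [Hinv]

theorem Hmul_self (x : ℝ × ℝ × ℝ) : Hmul x x = (2 * x.1, 2 * x.2.1, 2 * x.2.2) := by
  simp only [Hmul, Prod.mk.injEq]
  refine ⟨by ring, by ring, by ring⟩

theorem Hτ_Hmul_self (x : ℝ × ℝ × ℝ) :
    Hτ (Hmul x x) = (x.1, x.2.1, x.2.2 + 2 * x.1 * x.2.1 / 3) := by
  simp only [Hmul_self, Hτ, Prod.mk.injEq]
  refine ⟨by ring, by ring, by ring⟩

theorem Hmid_Hinv_self (x : ℝ × ℝ × ℝ) : Hmid x (Hinv x) = (0, 0, -(2 * x.1 * x.2.1) / 3) := by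
  rw [Hmid, Hinv_Hinv, Hτ_Hmul_self]
  simp only [Hmul, Hinv, Prod.mk.injEq]
  refine ⟨by ring, by ring, by ring⟩

theorem central_eq_zero_iff (a b : ℝ) :
    ((0 : ℝ), (0 : ℝ), -(2 * a * b) / 3) = ((0 : ℝ), (0 : ℝ), (0 : ℝ)) ↔ a * b = 0 := by
  simp only [Prod.mk.injEq, true_and]
  constructor <;> intro h <;> linarith

/-- The midpoint between `x = (a,b,c)` and `x⁻¹` is `(0,0,-2ab/3)`; in particular it is the
identity if and only if `ab = 0`. -/
theorem heisenberg_midpoint_self_inverse (a b c : ℝ) :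
    Hmid (a, b, c) (Hinv (a, b, c)) = (0, 0, -(2 * a * b) / 3) ∧
    (Hmid (a, b, c) (Hinv (a, b, c)) = ((0 : ℝ), (0 : ℝ), (0 : ℝ)) ↔ a * b = 0) := by
  have hmid : Hmid (a, b, c) (Hinv (a, b, c)) = (0, 0, -(2 * a * b) / 3) :=
    Hmid_Hinv_self (a, b, c)
  exact ⟨hmid, hmid ▸ central_eq_zero_iff a b⟩
end

section
/- If m(x,y) = x·τ(y⁻¹x)⁻¹ on the Heisenberg group with τ(a,b,c) = (a/2, b/2, c/2 + ab/6), and if a₁ = a₂ or b₁ = b₂, then m((a₁,b₁,c₁),(a₂,b₂,c₂)) = ((a₁+a₂)/2, (b₁+b₂)/2, (c₁+c₂)/2), the Euclidean midpoint. -/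
/-!
Writing `y⁻¹x = (α, β, γ)` with `α = a₁ - a₂`, `β = b₁ - b₂`, the cross terms of the group law
cancel in `x·τ(y⁻¹x)⁻¹`, and the only deviation from the Euclidean midpoint is the correction
`αβ/6` that `τ` adds in the central coordinate. It vanishes exactly when `a₁ = a₂` or `b₁ = b₂`.
-/

theorem Hmid_eq (x y : ℝ × ℝ × ℝ) :
    Hmid x y = ((x.1 + y.1) / 2, (x.2.1 + y.2.1) / 2,
      (x.2.2 + y.2.2) / 2 - (x.1 - y.1) * (x.2.1 - y.2.1) / 6) := by
  simp only [Hmid, Hmul, Hinv, Hτ, Prod.mk.injEq]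
  refine ⟨?_, ?_, ?_⟩ <;> ring

/-- If `a₁ = a₂` or `b₁ = b₂`, the Heisenberg midpoint is the Euclidean midpoint. -/
theorem heisenberg_midpoint_euclidean (a₁ b₁ c₁ a₂ b₂ c₂ : ℝ)
    (h : a₁ = a₂ ∨ b₁ = b₂) :
    Hmid (a₁, b₁, c₁) (a₂, b₂, c₂)
      = ((a₁ + a₂) / 2, (b₁ + b₂) / 2, (c₁ + c₂) / 2) := by
  have correction_eq_zero : (a₁ - a₂) * (b₁ - b₂) = 0 := by
    rcases h with rfl | rfl <;> ring
  rw [Hmid_eq]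
  simp only [correction_eq_zero, zero_div, sub_zero]
end

section
/- Let τ : ℝⁿ → ℝⁿ be an admissible quantizing function of order μ ≥ 0 and σ ∈ S^m. Then for all multi-indices α, γ, |∂_x^α ∂_ξ^γ [σ(x + τ(y-x), ξ)]| ≤ C_{α,γ} ⟨ξ⟩^{m-|γ|} ⟨x-y⟩^{μ|α|}, i.e. σ ∈ S^m_{μ,τ}. -/
section aux
variable {E F : Type*} [NormedAddCommGroup E] [NormedSpace ℝ E]
  [NormedAddCommGroup F] [NormedSpace ℝ F]

lemma aux_fderiv_comp_const_add (g : E → F) (c x : E) :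
    fderiv ℝ (fun z => g (c + z)) x = fderiv ℝ g (c + x) := by
  by_cases h : DifferentiableAt ℝ g (c + x)
  · have h1 : HasFDerivAt (fun z : E => c + z) (ContinuousLinearMap.id ℝ E) x := by
      simpa using (hasFDerivAt_id x).const_add c
    have := (h.hasFDerivAt.comp x h1).fderiv
    exact this
  · have h2 : ¬ DifferentiableAt ℝ (fun z => g (c + z)) x := by
      intro hc
      apply h
      have hsub : DifferentiableAt ℝ (fun w : E => w - c) (c + x) :=
        differentiableAt_id.sub_const c
      have hc' : DifferentiableAt ℝ (fun z => g (c + z)) ((fun w : E => w - c) (c + x)) := by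
        simpa [add_sub_cancel_left] using hc
      have := hc'.comp (c + x) hsub
      have e : ((fun z => g (c + z)) ∘ fun w : E => w - c) = g := by
        funext w; simp [Function.comp]
      rwa [e] at this
    rw [fderiv_zero_of_not_differentiableAt h, fderiv_zero_of_not_differentiableAt h2]

lemma aux_itfd_comp_const_add (i : ℕ) (g : E → F) (c : E) :
    ∀ x, iteratedFDeriv ℝ i (fun z => g (c + z)) x = iteratedFDeriv ℝ i g (c + x) := by
  induction i with
  | zero => intro x; ext m; simp [iteratedFDeriv_zero_apply]
  | succ i ih =>
    intro x
    rw [iteratedFDeriv_succ_eq_comp_left, iteratedFDeriv_succ_eq_comp_left]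
    simp only [Function.comp_apply]
    congr 1
    have e : iteratedFDeriv ℝ i (fun z => g (c + z))
        = fun z => iteratedFDeriv ℝ i g (c + z) := funext ih
    rw [e]
    exact aux_fderiv_comp_const_add _ c x

lemma aux_itfd_comp_sub (i : ℕ) (g : E → F) (y x : E) :
    ‖iteratedFDeriv ℝ i (fun z => g (y - z)) x‖ = ‖iteratedFDeriv ℝ i g (y - x)‖ := by
  have e : (fun z => g (y - z)) = (fun z => g (y + z)) ∘ (LinearIsometryEquiv.neg ℝ (E := E)) := by
    funext z; simp [sub_eq_add_neg]
  rw [e, LinearIsometryEquiv.norm_iteratedFDeriv_comp_right, aux_itfd_comp_const_add]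
  simp [sub_eq_add_neg]

lemma aux_itfd_id_le (i : ℕ) (hi : 1 ≤ i) (x : E) :
    ‖iteratedFDeriv ℝ i (fun z : E => z) x‖ ≤ 1 := by
  obtain ⟨j, rfl⟩ : ∃ j, i = j + 1 := ⟨i - 1, by omega⟩
  rw [← norm_iteratedFDeriv_fderiv]
  have e : fderiv ℝ (fun z : E => z) = fun _ => ContinuousLinearMap.id ℝ E := by
    funext z; exact fderiv_id'
  rw [e]
  cases j with
  | zero => simpa [norm_iteratedFDeriv_zero] using ContinuousLinearMap.norm_id_le
  | succ j =>
    rw [iteratedFDeriv_const_of_ne (by omega)]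
    simp

end aux

set_option maxHeartbeats 2000000 in
/-- If `τ` is admissible of order `μ` and `σ ∈ Sᵐ`, then
`|∂_x^α ∂_ξ^γ [σ(x + τ(y-x), ξ)]| ≲ ⟨ξ⟩^{m-|γ|} ⟨x-y⟩^{μ|α|}`, i.e. `σ ∈ S^m_{μ,τ}`. -/
theorem symbol_in_tau_class (n : ℕ) (m μ : ℝ) (hμ : 0 ≤ μ)
    (τ : EuclideanSpace ℝ (Fin n) → EuclideanSpace ℝ (Fin n))
    (hτ : ContDiff ℝ (⊤ : ℕ∞) τ) (h0 : τ 0 = 0)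
    (hder : ∀ k : ℕ, 1 ≤ k → ∃ C : ℝ, ∀ z,
      ‖iteratedFDeriv ℝ k τ z‖ ≤ C * (1 + ‖z‖ ^ 2) ^ (μ / 2))
    (σ : EuclideanSpace ℝ (Fin n) → EuclideanSpace ℝ (Fin n) → ℂ)
    (hσsm : ContDiff ℝ (⊤ : ℕ∞) (fun p : EuclideanSpace ℝ (Fin n) × EuclideanSpace ℝ (Fin n) =>
      σ p.1 p.2))
    (hσ : ∀ k l : ℕ, ∃ C : ℝ, ∀ x ξ,
      ‖iteratedFDeriv ℝ k (fun x' => iteratedFDeriv ℝ l (σ x') ξ) x‖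
        ≤ C * (1 + ‖ξ‖ ^ 2) ^ ((m - l) / 2)) :
    ∀ k l : ℕ, ∃ C : ℝ, ∀ x y ξ : EuclideanSpace ℝ (Fin n),
      ‖iteratedFDeriv ℝ k (fun x' =>
          iteratedFDeriv ℝ l (fun ξ' => σ (x' + τ (y - x')) ξ') ξ) x‖
        ≤ C * (1 + ‖ξ‖ ^ 2) ^ ((m - l) / 2) * (1 + ‖x - y‖ ^ 2) ^ (μ * k / 2) := by
  intro k l
  classical
  have hE : True := trivial
  -- constants for σ
  choose Cσ hCσ using hσ
  set A : ℝ := ∑ i ∈ Finset.range (k + 1), |Cσ i l| with hA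
  have hA0 : 0 ≤ A := Finset.sum_nonneg fun _ _ => abs_nonneg _
  have hAi : ∀ i, i ≤ k → Cσ i l ≤ A := by
    intro i hi
    refine (le_abs_self _).trans ?_
    exact Finset.single_le_sum (f := fun j => |Cσ j l|) (fun _ _ => abs_nonneg _)
      (Finset.mem_range.mpr (by omega))
  -- constants for τ
  have hder' : ∀ j : ℕ, ∃ C : ℝ, 0 ≤ C ∧ ∀ z : EuclideanSpace ℝ (Fin n),
      ‖iteratedFDeriv ℝ (j + 1) τ z‖ ≤ C * (1 + ‖z‖ ^ 2) ^ (μ / 2) := by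
    intro j
    obtain ⟨C, hC⟩ := hder (j + 1) (by omega)
    refine ⟨max C 0, le_max_right _ _, fun z => (hC z).trans ?_⟩
    have : (0:ℝ) ≤ (1 + ‖z‖ ^ 2) ^ (μ / 2) := Real.rpow_nonneg (by positivity) _
    exact mul_le_mul_of_nonneg_right (le_max_left _ _) this
  choose Cτ hCτ0 hCτ using hder'
  set B : ℝ := ∑ j ∈ Finset.range (k + 1), Cτ j with hB
  have hB0 : 0 ≤ B := Finset.sum_nonneg fun j _ => hCτ0 j
  have hBj : ∀ j, j ≤ k → Cτ j ≤ B := fun j hj =>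
    Finset.single_le_sum (f := fun j => Cτ j) (fun j _ => hCτ0 j) (Finset.mem_range.mpr (by omega))
  refine ⟨(Nat.factorial k : ℝ) * A * (1 + B) ^ k, ?_⟩
  intro x y ξ
  set X : ℝ := (1 + ‖ξ‖ ^ 2) ^ ((m - l) / 2) with hX
  have hX0 : 0 ≤ X := by rw [hX]; positivity
  set w : ℝ := (1 + ‖x - y‖ ^ 2) ^ (μ / 2) with hw
  have hw1 : (1:ℝ) ≤ w := by
    rw [hw]
    calc (1:ℝ) = (1:ℝ) ^ (μ / 2) := (Real.one_rpow _).symm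
    _ ≤ (1 + ‖x - y‖ ^ 2) ^ (μ / 2) :=
        Real.rpow_le_rpow (by norm_num) (le_add_of_nonneg_right (by positivity)) (by linarith)
  have hw0 : 0 ≤ w := le_trans zero_le_one hw1
  set f : EuclideanSpace ℝ (Fin n) → EuclideanSpace ℝ (Fin n) := fun x' => x' + τ (y - x') with hf
  set g : EuclideanSpace ℝ (Fin n) → ContinuousMultilinearMap ℝ (fun _ : Fin l => EuclideanSpace ℝ (Fin n)) ℂ :=
    fun u => iteratedFDeriv ℝ l (σ u) ξ with hg
  -- smoothness of f
  have hτs : ContDiff ℝ ((⊤ : ℕ∞) : WithTop ℕ∞) fun x' : EuclideanSpace ℝ (Fin n) => τ (y - x') :=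
    hτ.comp (contDiff_const.sub contDiff_id)
  have hfs : ContDiff ℝ ((⊤ : ℕ∞) : WithTop ℕ∞) f := contDiff_id.add hτs
  -- smoothness of g
  have hgs : ContDiff ℝ ((⊤ : ℕ∞) : WithTop ℕ∞) g := by
    let L : ContinuousMultilinearMap ℝ
          (fun _ : Fin l => EuclideanSpace ℝ (Fin n) × EuclideanSpace ℝ (Fin n)) ℂ →L[ℝ]
        ContinuousMultilinearMap ℝ (fun _ : Fin l => EuclideanSpace ℝ (Fin n)) ℂ :=
      ContinuousMultilinearMap.compContinuousLinearMapL
        (fun _ => ContinuousLinearMap.inr ℝ (EuclideanSpace ℝ (Fin n)) (EuclideanSpace ℝ (Fin n)))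
    have key : g = fun u =>
        L (iteratedFDeriv ℝ l (fun p : EuclideanSpace ℝ (Fin n) × EuclideanSpace ℝ (Fin n) => σ p.1 p.2) (u, ξ)) := by
      funext u
      show iteratedFDeriv ℝ l (σ u) ξ = _
      have e1 : σ u = (fun q : EuclideanSpace ℝ (Fin n) × EuclideanSpace ℝ (Fin n) => σ ((u, (0:EuclideanSpace ℝ (Fin n))) + q).1 ((u, (0:EuclideanSpace ℝ (Fin n))) + q).2) ∘
          (ContinuousLinearMap.inr ℝ (EuclideanSpace ℝ (Fin n)) (EuclideanSpace ℝ (Fin n))) := by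
        funext ξ'
        simp
      have hΦu : ContDiff ℝ ((⊤ : ℕ∞) : WithTop ℕ∞) (fun q : EuclideanSpace ℝ (Fin n) × EuclideanSpace ℝ (Fin n) =>
          σ ((u, (0:EuclideanSpace ℝ (Fin n))) + q).1 ((u, (0:EuclideanSpace ℝ (Fin n))) + q).2) := by
        exact hσsm.comp (contDiff_const.add contDiff_id)
      rw [e1, ContinuousLinearMap.iteratedFDeriv_comp_right _ hΦu _ (by exact_mod_cast le_top)]
      show _ = (iteratedFDeriv ℝ l (fun p : EuclideanSpace ℝ (Fin n) × EuclideanSpace ℝ (Fin n) => σ p.1 p.2) (u, ξ)).compContinuousLinearMap _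
      congr 1
      rw [aux_itfd_comp_const_add l (fun p : EuclideanSpace ℝ (Fin n) × EuclideanSpace ℝ (Fin n) => σ p.1 p.2) ((u, (0:EuclideanSpace ℝ (Fin n))))]
      congr 1
      simp [Prod.ext_iff]
    rw [key]
    exact L.contDiff.comp
      ((hσsm.iteratedFDeriv_right (by exact_mod_cast le_top)).comp (contDiff_id.prodMk contDiff_const))
  -- bound on derivatives of g
  have hC : ∀ i, i ≤ k → ‖iteratedFDeriv ℝ i g (f x)‖ ≤ A * X := by
    intro i hi
    refine (hCσ i l (f x) ξ).trans ?_
    exact mul_le_mul_of_nonneg_right (hAi i hi) hX0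
  -- bound on derivatives of f
  have hD : ∀ i, 1 ≤ i → i ≤ k → ‖iteratedFDeriv ℝ i f x‖ ≤ ((1 + B) * w) ^ i := by
    intro i hi1 hik
    obtain ⟨j, rfl⟩ : ∃ j, i = j + 1 := ⟨i - 1, by omega⟩
    have hsplit : iteratedFDeriv ℝ (j + 1) f x
        = iteratedFDeriv ℝ (j + 1) (fun x' : EuclideanSpace ℝ (Fin n) => x') x
          + iteratedFDeriv ℝ (j + 1) (fun x' : EuclideanSpace ℝ (Fin n) => τ (y - x')) x :=
      iteratedFDeriv_add_apply' (contDiff_id.of_le le_top).contDiffAt (hτs.of_le (by exact_mod_cast le_top)).contDiffAt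
    have hτbound : ‖iteratedFDeriv ℝ (j + 1) (fun x' : EuclideanSpace ℝ (Fin n) => τ (y - x')) x‖ ≤ B * w := by
      rw [aux_itfd_comp_sub]
      refine (hCτ j (y - x)).trans ?_
      have : (1 + ‖y - x‖ ^ 2) ^ (μ / 2) = w := by rw [hw, norm_sub_rev]
      rw [this]
      exact mul_le_mul_of_nonneg_right (hBj j (by omega)) hw0
    have step : ‖iteratedFDeriv ℝ (j + 1) f x‖ ≤ (1 + B) * w := by
      rw [hsplit]
      refine (norm_add_le _ _).trans ?_
      have h1 : ‖iteratedFDeriv ℝ (j + 1) (fun x' : EuclideanSpace ℝ (Fin n) => x') x‖ ≤ 1 :=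
        aux_itfd_id_le (j + 1) (by omega) x
      nlinarith [hτbound, h1, hw1, hB0]
    have h2 : (1:ℝ) ≤ (1 + B) * w := by
      calc (1:ℝ) = 1 * 1 := by ring
      _ ≤ (1 + B) * w := mul_le_mul (by linarith) hw1 zero_le_one (by linarith)
    exact step.trans (le_self_pow₀ h2 (by omega))
  have main := norm_iteratedFDeriv_comp_le hgs hfs (by exact_mod_cast le_top) x hC hD
  have goal_eq : (fun x' : EuclideanSpace ℝ (Fin n) =>
      iteratedFDeriv ℝ l (fun ξ' => σ (x' + τ (y - x')) ξ') ξ) = g ∘ f := rfl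
  rw [goal_eq]
  have hwk : w ^ k = (1 + ‖x - y‖ ^ 2) ^ (μ * k / 2) := by
    rw [hw, ← Real.rpow_natCast ((1 + ‖x - y‖ ^ 2) ^ (μ / 2)) k,
      ← Real.rpow_mul (by positivity)]
    congr 1
    ring
  refine main.trans (le_of_eq ?_)
  rw [mul_pow, ← hwk]
  ring
end
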